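/- arXiv:2201.01379 — 11 statements merged into one kernel-verified Lean document; each statement's English description precedes it below -/
import Mathlib

section
/- Let G = (V,E) be a finite simple graph and let A be a symmetric real matrix with rows and columns indexed by V such that A_{ij} = 1 for every pair {i,j} that is not an edge of G (including the diagonal entries A_{ii} = 1, since G has no loops). Then the independence number α(G) is at most the maximal eigenvalue λ_max(A) of A. -/
/-!
By the spectral theorem, `λ_max • 1 - A` is positive semidefinite, so `xᴴ A x ≤ λ_max ‖x‖²`.
For the indicator vector `x` of an independent set `I`, every entry of `A` on `I × I` is `1`,
hence `xᵀ A x = |I|²` while `‖x‖² = |I|`.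
-/

open Matrix Unitary
open scoped ComplexOrder

namespace Matrix.IsHermitian

variable {𝕜 n : Type*} [RCLike 𝕜] [Fintype n] [DecidableEq n] {A : Matrix n n 𝕜}

theorem posSemidef_iSup_eigenvalues_smul_one_sub (hA : A.IsHermitian) :
    (((⨆ i, hA.eigenvalues i : ℝ) : 𝕜) • 1 - A).PosSemidef := by
  set M := ⨆ i, hA.eigenvalues i
  have hdiag : ((M : 𝕜) • 1 - A) = conjStarAlgAut 𝕜 _ hA.eigenvectorUnitary
      (diagonal (RCLike.ofReal ∘ (fun i => M - hA.eigenvalues i))) := by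
    have : diagonal (RCLike.ofReal ∘ (fun i => M - hA.eigenvalues i)) =
        (M : 𝕜) • (1 : Matrix n n 𝕜) - diagonal (RCLike.ofReal ∘ hA.eigenvalues) := by
      ext i j
      by_cases h : i = j <;>
        simp [h, RCLike.algebraMap_eq_ofReal, RCLike.real_smul_eq_coe_mul]
    rw [this, map_sub, map_smul, map_one, ← hA.spectral_theorem]
  rw [hdiag, conjStarAlgAut_apply]
  refine PosSemidef.mul_mul_conjTranspose_same (PosSemidef.diagonal fun i => ?_) _
  simpa using le_ciSup (Set.finite_range hA.eigenvalues).bddAbove i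

theorem dotProduct_mulVec_le_iSup_eigenvalues_mul (hA : A.IsHermitian) (x : n → 𝕜) :
    star x ⬝ᵥ (A *ᵥ x) ≤ ((⨆ i, hA.eigenvalues i : ℝ) : 𝕜) * (star x ⬝ᵥ x) := by
  have := hA.posSemidef_iSup_eigenvalues_smul_one_sub.dotProduct_mulVec_nonneg x
  rwa [sub_mulVec, dotProduct_sub, smul_mulVec, one_mulVec, dotProduct_smul, smul_eq_mul,
    sub_nonneg] at this

theorem card_le_iSup_eigenvalues_of_forall_eq_one {A : Matrix n n ℝ} (hA : A.IsHermitian)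
    {s : Finset n} (hs : s.Nonempty) (h : ∀ i ∈ s, ∀ j ∈ s, A i j = 1) :
    (s.card : ℝ) ≤ ⨆ i, hA.eigenvalues i := by
  set x : n → ℝ := fun i => if i ∈ s then 1 else 0
  have hquad : star x ⬝ᵥ (A *ᵥ x) = s.card * s.card :=
    calc star x ⬝ᵥ (A *ᵥ x) = ∑ i ∈ s, ∑ j ∈ s, A i j := by
          simp [x, dotProduct, mulVec, Finset.sum_ite_mem]
      _ = ∑ i ∈ s, ∑ j ∈ s, 1 := Finset.sum_congr rfl fun i hi => Finset.sum_congr rfl (h i hi)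
      _ = s.card * s.card := by simp
  have hnorm : star x ⬝ᵥ x = s.card := by simp [x, dotProduct]
  have := hA.dotProduct_mulVec_le_iSup_eigenvalues_mul x
  rw [hquad, hnorm] at this
  exact le_of_mul_le_mul_right (by simpa using this) (by simpa using hs)

end Matrix.IsHermitian

theorem stmt_0_general {V : Type*} [Fintype V] [DecidableEq V]
    (G : SimpleGraph V) (A : Matrix V V ℝ) (hA : A.IsHermitian)
    (h1 : ∀ i j : V, ¬ G.Adj i j → A i j = 1)
    (I : Finset V) (hI : ∀ i ∈ I, ∀ j ∈ I, ¬ G.Adj i j) :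
    (I.card : ℝ) ≤ ⨆ i, hA.eigenvalues i := by
  rcases I.eq_empty_or_nonempty with rfl | hne
  · rcases isEmpty_or_nonempty V with _ | ⟨⟨v⟩⟩
    · simp [Real.iSup_of_isEmpty]
    · have hv := hA.card_le_iSup_eigenvalues_of_forall_eq_one (Finset.singleton_nonempty v)
        (by simpa using h1 v v (G.irrefl))
      simpa using zero_le_one.trans (by simpa using hv)
  · exact hA.card_le_iSup_eigenvalues_of_forall_eq_one hne fun i hi j hj => h1 i j (hI i hi j hj)

/-- Lovász theta bound: for a finite simple graph `G` and a real symmetric matrix `A`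
with `A i j = 1` for every non-edge `{i,j}` (including the diagonal), every independent
set `I` of `G` satisfies `|I| ≤ λ_max(A)`. -/
theorem stmt_0 {V : Type*} [Fintype V] [DecidableEq V] [Nonempty V]
    (G : SimpleGraph V) (A : Matrix V V ℝ) (hA : A.IsHermitian)
    (h1 : ∀ i j : V, ¬ G.Adj i j → A i j = 1)
    (I : Finset V) (hI : ∀ i ∈ I, ∀ j ∈ I, ¬ G.Adj i j) :
    (I.card : ℝ) ≤ ⨆ i, hA.eigenvalues i :=
  stmt_0_general G A hA h1 I hI
end

section
/- Let G = (V,E) be a finite simple graph and let A be a symmetric real matrix indexed by V with A_{ij} = 1 for every non-edge {i,j} (including the diagonal). Let c be the minimal entry of A and λ_max its maximal eigenvalue. If I ⊆ V spans at most ε|I|²/2 edges of G and (1−c)ε < 1, then |I| ≤ λ_max / (1 − (1−c)ε). -/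
/-!
Test the quadratic form of `A` on the indicator vector `x` of `I`. On the one hand
`xᵀAx ≤ λ_max ‖x‖² = λ_max |I|`. On the other hand `xᵀAx` is the sum of the entries of `A` over
`I × I`: every pair that is not an edge contributes `1` and each of the at most `ε|I|²` ordered
edge pairs loses at most `1 - c`, so `xᵀAx ≥ |I|² (1 - (1 - c) ε)`.
-/

open Matrix Finset
open scoped MatrixOrder

namespace Matrix

theorem IsHermitian.dotProduct_mulVec_le_iSup_eigenvalues_mul_s1 {n : Type*} [Fintype n]
    [DecidableEq n] {A : Matrix n n ℝ} (hA : A.IsHermitian) (x : n → ℝ) :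
    x ⬝ᵥ (A *ᵥ x) ≤ (⨆ i, hA.eigenvalues i) * (x ⬝ᵥ x) := by
  have hle : A ≤ algebraMap ℝ _ (⨆ i, hA.eigenvalues i) := by
    refine le_algebraMap_of_spectrum_le (fun r hr => ?_) hA
    obtain ⟨i, rfl⟩ := hA.spectrum_real_eq_range_eigenvalues ▸ hr
    exact le_ciSup (Set.finite_range _).bddAbove i
  simpa [sub_mulVec, dotProduct_sub, Algebra.algebraMap_eq_smul_one, smul_mulVec, mul_comm]
    using (le_iff.mp hle).dotProduct_mulVec_nonneg x

theorem IsHermitian.diag_le_iSup_eigenvalues {n : Type*} [Fintype n] [DecidableEq n]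
    {A : Matrix n n ℝ} (hA : A.IsHermitian) (i : n) :
    A i i ≤ ⨆ j, hA.eigenvalues j := by
  simpa using hA.dotProduct_mulVec_le_iSup_eigenvalues_mul_s1 (Pi.single i 1)

theorem indicator_dotProduct_mulVec_indicator {n R : Type*} [Fintype n] [NonAssocSemiring R]
    (A : Matrix n n R) (s : Finset n) :
    (s : Set n).indicator 1 ⬝ᵥ (A *ᵥ (s : Set n).indicator 1) = ∑ p ∈ s ×ˢ s, A p.1 p.2 := by
  classical
  simp only [dotProduct, mulVec, Set.indicator_apply, mem_coe, Pi.one_apply, ite_mul, one_mul,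
    zero_mul, mul_ite, mul_one, mul_zero, sum_ite_mem, univ_inter, sum_product]

theorem indicator_dotProduct_indicator {n R : Type*} [Fintype n] [NonAssocSemiring R]
    (s : Finset n) :
    (s : Set n).indicator 1 ⬝ᵥ (s : Set n).indicator (1 : n → R) = #s := by
  classical
  simp [dotProduct, Set.indicator_apply, sum_ite_mem]

end Matrix

theorem Finset.card_sub_mul_card_filter_le_sum {α : Type*} (s : Finset α) (P : α → Prop)
    [DecidablePred P] {f : α → ℝ} {c : ℝ} (hf : ∀ a ∈ s, ¬ P a → f a = 1)
    (hc : ∀ a ∈ s, c ≤ f a) :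
    #s - (1 - c) * #(s.filter P) ≤ ∑ a ∈ s, f a := by
  have hdefect : ∑ a ∈ s, (1 - f a) = ∑ a ∈ s.filter P, (1 - f a) :=
    (sum_filter_of_ne fun a ha hne => by_contra fun hP => hne (by simp [hf a ha hP])).symm
  have hbound : ∑ a ∈ s.filter P, (1 - f a) ≤ #(s.filter P) • (1 - c) :=
    sum_le_card_nsmul _ _ _ fun a ha => by linarith [hc a (mem_filter.mp ha).1]
  rw [sum_sub_distrib, sum_const, nsmul_one] at hdefect
  rw [nsmul_eq_mul] at hbound
  linarith

theorem stmt_1_general {V : Type*} [Fintype V] [DecidableEq V]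
    (G : SimpleGraph V) [DecidableRel G.Adj] (A : Matrix V V ℝ) (hA : A.IsHermitian)
    (h1 : ∀ i j : V, ¬ G.Adj i j → A i j = 1)
    (c : ℝ) (hc : IsLeast (Set.range fun p : V × V => A p.1 p.2) c)
    (ε : ℝ) (hcε : (1 - c) * ε < 1)
    (I : Finset V)
    (hI : ((((I ×ˢ I).filter fun p => G.Adj p.1 p.2).card : ℝ)) ≤ ε * (I.card : ℝ) ^ 2) :
    (I.card : ℝ) ≤ (⨆ i, hA.eigenvalues i) / (1 - (1 - c) * ε) := by
  obtain ⟨⟨v, -⟩, -⟩ := hc.1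
  have hdiag : A v v = 1 := h1 v v G.irrefl
  have hc1 : c ≤ 1 := hdiag ▸ hc.2 ⟨(v, v), rfl⟩
  have hlam : 1 ≤ ⨆ i, hA.eigenvalues i := hdiag ▸ hA.diag_le_iSup_eigenvalues v
  have hsum := card_sub_mul_card_filter_le_sum (I ×ˢ I) (fun p => G.Adj p.1 p.2)
    (fun p _ hp => h1 p.1 p.2 hp) (fun p _ => hc.2 ⟨p, rfl⟩)
  have hray := hA.dotProduct_mulVec_le_iSup_eigenvalues_mul_s1 ((I : Set V).indicator 1)
  rw [indicator_dotProduct_mulVec_indicator, indicator_dotProduct_indicator] at hray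
  rw [card_product, Nat.cast_mul] at hsum
  have hedges := mul_le_mul_of_nonneg_left hI (sub_nonneg.mpr hc1)
  rw [le_div_iff₀ (by linarith)]
  rcases (Nat.zero_le #I).eq_or_lt with hI0 | hIpos
  · simp only [← hI0, Nat.cast_zero, zero_mul]
    linarith
  · have hIpos : (0 : ℝ) < #I := Nat.cast_pos.mpr hIpos
    nlinarith

/-- Supersaturation version of the Lovász bound: if `I` spans at most `ε|I|²/2` edges
(equivalently, at most `ε|I|²` ordered adjacent pairs) and `(1-c)ε < 1`, where `c` is the
minimal entry of `A`, then `|I| ≤ λ_max / (1 - (1-c)ε)`. -/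
theorem stmt_1 {V : Type*} [Fintype V] [DecidableEq V] [Nonempty V]
    (G : SimpleGraph V) [DecidableRel G.Adj] (A : Matrix V V ℝ) (hA : A.IsHermitian)
    (h1 : ∀ i j : V, ¬ G.Adj i j → A i j = 1)
    (c : ℝ) (hc : IsLeast (Set.range fun p : V × V => A p.1 p.2) c)
    (ε : ℝ) (hε : 0 ≤ ε) (hcε : (1 - c) * ε < 1)
    (I : Finset V)
    (hI : ((((I ×ˢ I).filter fun p => G.Adj p.1 p.2).card : ℝ)) ≤ ε * (I.card : ℝ) ^ 2) :
    (I.card : ℝ) ≤ (⨆ i, hA.eigenvalues i) / (1 - (1 - c) * ε) :=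
  stmt_1_general G A hA h1 c hc ε hcε I hI
end

section
/- (Berlekamp–Graver eventown theorem) If F is an eventown family of subsets of [n], then |F| ≤ 2^{⌊n/2⌋}. -/
/-!
Identify a set with its characteristic vector in `𝔽₂ⁿ`; then `|f₁ ∩ f₂| mod 2` is the dot
product of the two vectors, so an eventown family spans a subspace `W` with `W ≤ W^⊥`. As the
dot product is nondegenerate, `dim W + dim W^⊥ = n`, hence `dim W ≤ n / 2`, and
`|F| ≤ |W| = 2 ^ dim W ≤ 2 ^ ⌊n/2⌋`.
-/

open Finset Module Submodule

namespace LinearMap.BilinForm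

variable {R M : Type*} [CommSemiring R] [AddCommMonoid M] [Module R M]
  {B : LinearMap.BilinForm R M}

theorem span_le_orthogonal_span {S : Set M} (hS : ∀ x ∈ S, ∀ y ∈ S, B x y = 0) :
    span R S ≤ B.orthogonal (span R S) := by
  refine span_le.mpr fun x hx y hy => ?_
  induction hy using span_induction with
  | mem y hy => exact hS y hy x hx
  | zero => exact zero_left x
  | add y z _ _ hy hz => simp_all
  | smul c y _ hy => simp_all

theorem two_mul_finrank_le_of_le_orthogonal {K V : Type*} [Field K] [AddCommGroup V] [Module K V]
    [FiniteDimensional K V] {B : LinearMap.BilinForm K V} (hB : B.Nondegenerate)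
    {W : Submodule K V} (hW : W ≤ B.orthogonal W) : 2 * finrank K W ≤ finrank K V := by
  have hle := finrank_mono hW
  rw [finrank_orthogonal hB] at hle
  have hWV := W.finrank_le
  omega

end LinearMap.BilinForm

theorem dotProductBilin_nondegenerate (R ι : Type*) [CommSemiring R] [Fintype ι] :
    (dotProductBilin R R : LinearMap.BilinForm R (ι → R)).Nondegenerate :=
  ⟨fun x hx => dotProduct_eq_zero x hx,
    fun y hy => dotProduct_eq_zero y fun x => (dotProduct_comm y x).trans (hy x)⟩

theorem Finset.card_le_card_pow_finrank_span {K V : Type*} [Field K] [Finite K] [AddCommGroup V]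
    [Module K V] (S : Finset V) : #S ≤ Nat.card K ^ finrank K (span K (S : Set V)) := by
  have : Finite (span K (S : Set V)) := Module.finite_of_finite K
  calc #S = (S : Set V).ncard := (Set.ncard_coe_finset S).symm
    _ ≤ (span K (S : Set V) : Set V).ncard := Set.ncard_le_ncard subset_span (Set.toFinite _)
    _ = Nat.card (span K (S : Set V)) := Nat.card_coe_set_eq _ |>.symm
    _ = Nat.card K ^ finrank K (span K (S : Set V)) := Module.natCard_eq_pow_finrank

def charVec {ι : Type*} [DecidableEq ι] (R : Type*) [Zero R] [One R] (s : Finset ι) : ι → R :=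
  fun i => if i ∈ s then 1 else 0

theorem charVec_injective {ι : Type*} [DecidableEq ι] (R : Type*) [Zero R] [One R]
    [NeZero (1 : R)] :
    Function.Injective (charVec (ι := ι) R) := by
  intro s t h
  ext i
  have := congrFun h i
  by_cases hs : i ∈ s <;> by_cases ht : i ∈ t <;> simp_all [charVec]

theorem charVec_dotProduct_charVec {ι : Type*} [Fintype ι] [DecidableEq ι] (R : Type*)
    [NonAssocSemiring R] (s t : Finset ι) : charVec R s ⬝ᵥ charVec R t = #(s ∩ t) := by
  simp [dotProduct, charVec, Finset.sum_ite_mem, Finset.inter_comm]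

/-- Berlekamp–Graver eventown theorem: if all pairwise intersections (including
self-intersections) of members of `F ⊆ 2^[n]` have even size, then `|F| ≤ 2^⌊n/2⌋`. -/
theorem stmt_3 {n : ℕ} (F : Finset (Finset (Fin n)))
    (hF : ∀ f₁ ∈ F, ∀ f₂ ∈ F, Even (f₁ ∩ f₂).card) :
    F.card ≤ 2 ^ (n / 2) := by
  set S := F.image (charVec (ZMod 2))
  set W := span (ZMod 2) (S : Set (Fin n → ZMod 2))
  have hW : W ≤ LinearMap.BilinForm.orthogonal (dotProductBilin (ZMod 2) (ZMod 2)) W := by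
    refine LinearMap.BilinForm.span_le_orthogonal_span ?_
    simp only [S, coe_image, Set.forall_mem_image, mem_coe]
    intro f₁ h₁ f₂ h₂
    simpa [charVec_dotProduct_charVec, ZMod.natCast_eq_zero_iff_even] using hF f₁ h₁ f₂ h₂
  have hdim : 2 * finrank (ZMod 2) W ≤ n := by
    simpa using LinearMap.BilinForm.two_mul_finrank_le_of_le_orthogonal
      (dotProductBilin_nondegenerate (ZMod 2) (Fin n)) hW
  calc #F = #S := (card_image_of_injective F (charVec_injective _)).symm
    _ ≤ 2 ^ finrank (ZMod 2) W := by
      simpa using S.card_le_card_pow_finrank_span (K := ZMod 2)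
    _ ≤ 2 ^ (n / 2) := Nat.pow_le_pow_right two_pos (by omega)
end

section
/- Let k ≥ 2 and n ≥ 1 be integers. If F is a k-town family of vectors in (ℤ/kℤ)^n, then |F| ≤ k^{n/2}. -/
/-!
Put `K = F^⊥` in `G = (ℤ/kℤ)^n`. Self-orthogonality says `F ⊆ K`, so `|F| ≤ |K|`. On the other
hand the characters `x ↦ exp (2πi (f ⬝ᵥ x) / k)`, `f ∈ F`, are trivial on `K` and pairwise distinct
(the scalar product is nondegenerate), so they are `|F|` distinct characters of `G ⧸ K`, whence
`|F| ≤ |G ⧸ K|`. Multiplying, `|F|² ≤ |G ⧸ K| |K| = kⁿ`.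
-/

def dotOrthogonal {ι R : Type*} [Fintype ι] [CommRing R] (S : Set (ι → R)) :
    AddSubgroup (ι → R) where
  carrier := {x | ∀ s ∈ S, s ⬝ᵥ x = 0}
  zero_mem' s _ := dotProduct_zero s
  add_mem' hx hy s hs := by rw [dotProduct_add, hx s hs, hy s hs, add_zero]
  neg_mem' hx s hs := by rw [dotProduct_neg, hx s hs, neg_zero]

section

variable {ι : Type*} [Fintype ι] {k : ℕ} [NeZero k]

noncomputable def dotCharOnQuotient (S : Set (ι → ZMod k)) (s : S) :
    AddChar ((ι → ZMod k) ⧸ dotOrthogonal S) ℂ :=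
  ZMod.stdAddChar.compAddMonoidHom <|
    QuotientAddGroup.lift _ (AddMonoidHom.mk' (s.1 ⬝ᵥ ·) (dotProduct_add s.1))
      fun _ hx => hx s s.2

lemma dotCharOnQuotient_injective (S : Set (ι → ZMod k)) :
    Function.Injective (dotCharOnQuotient S) := by
  intro s t hst
  refine Subtype.ext <| dotProduct_eq _ _ fun x => ZMod.injective_stdAddChar ?_
  exact DFunLike.congr_fun hst (x : (ι → ZMod k) ⧸ dotOrthogonal S)

lemma card_le_card_quotient_dotOrthogonal (S : Set (ι → ZMod k)) :
    Nat.card S ≤ Nat.card ((ι → ZMod k) ⧸ dotOrthogonal S) := by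
  classical
  calc Nat.card S ≤ Nat.card (AddChar ((ι → ZMod k) ⧸ dotOrthogonal S) ℂ) :=
        Nat.card_le_card_of_injective _ (dotCharOnQuotient_injective S)
    _ = Nat.card ((ι → ZMod k) ⧸ dotOrthogonal S) := by
        simp only [Nat.card_eq_fintype_card, AddChar.card_eq]

lemma card_sq_le_of_subset_dotOrthogonal {S : Set (ι → ZMod k)} (hS : S ⊆ dotOrthogonal S) :
    Nat.card S ^ 2 ≤ k ^ Fintype.card ι := by
  have hK : Nat.card S ≤ Nat.card (dotOrthogonal S) := Nat.card_mono (Set.toFinite _) hS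
  calc Nat.card S ^ 2
      ≤ Nat.card ((ι → ZMod k) ⧸ dotOrthogonal S) * Nat.card (dotOrthogonal S) :=
        pow_two (Nat.card S) ▸ Nat.mul_le_mul (card_le_card_quotient_dotOrthogonal S) hK
    _ = k ^ Fintype.card ι := by
        rw [← AddSubgroup.card_eq_card_quotient_mul_card_addSubgroup, Nat.card_pi]
        simp

end

theorem stmt_7_general {k n : ℕ} (hk : 2 ≤ k)
    (F : Finset (Fin n → ZMod k))
    (hF : ∀ f₁ ∈ F, ∀ f₂ ∈ F, ∑ r, f₁ r * f₂ r = 0) :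
    (F.card : ℝ) ≤ (k : ℝ) ^ ((n : ℝ) / 2) := by
  have : NeZero k := ⟨by omega⟩
  have hcard : F.card ^ 2 ≤ k ^ n := by
    simpa using card_sq_le_of_subset_dotOrthogonal (S := (F : Set (Fin n → ZMod k)))
      fun x hx s hs => hF s hs x hx
  rw [Real.rpow_div_two_eq_sqrt _ k.cast_nonneg, Real.rpow_natCast]
  refine le_of_pow_le_pow_left₀ two_ne_zero (by positivity) ?_
  rw [← pow_mul, mul_comm, pow_mul, Real.sq_sqrt k.cast_nonneg]
  exact_mod_cast hcard

/-- `k`-town theorem: if `F ⊆ (ℤ/kℤ)^n` is a family with all pairwise (including self)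
scalar products equal to `0` in `ℤ/kℤ`, then `|F| ≤ k^(n/2)`. -/
theorem stmt_7 {k n : ℕ} (hk : 2 ≤ k) (hn : 1 ≤ n)
    (F : Finset (Fin n → ZMod k))
    (hF : ∀ f₁ ∈ F, ∀ f₂ ∈ F, ∑ r, f₁ r * f₂ r = 0) :
    (F.card : ℝ) ≤ (k : ℝ) ^ ((n : ℝ) / 2) :=
  stmt_7_general hk F hF
end

section
/- Let k be a prime and let F be a set of vectors in (ℤ/kℤ)^n such that the number of ordered pairs (f₁, f₂) ∈ F × F with (f₁, f₂) ≠ 0 in ℤ/kℤ is at most ε|F|². If ε < (k−1)/k, then |F| ≤ k^{n/2} / (1 − (k/(k−1))·ε). -/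
/-!
Count the orthogonal pairs with a primitive additive character `ψ` of `ZMod k`: if `N₀` is their
number, then `k N₀ = ∑ₜ ∑_{f, g ∈ F} ψ (t (f, g))`. The term `t = 0` is `|F|²`. For `t ≠ 0` the inner
sum is the bilinear character sum over `F × tF`, which Lindsey's lemma (Cauchy–Schwarz followed by
Parseval) bounds by `k^(n/2) |F|`. Hence `k N₀ ≤ |F|² + (k - 1) k^(n/2) |F|`, and together with
`N₀ ≥ (1 - ε) |F|²` this rearranges to the claimed bound.
-/

open Finset

namespace AddChar

lemma map_sum_eq_prod {A M ι : Type*} [AddCommMonoid A] [CommMonoid M] (ψ : AddChar A M)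
    (s : Finset ι) (g : ι → A) : ψ (∑ i ∈ s, g i) = ∏ i ∈ s, ψ (g i) := by
  classical
  induction s using Finset.induction_on with
  | empty => simp
  | insert i s hi ih => rw [sum_insert hi, prod_insert hi, map_add_eq_mul, ih]

variable {R ι : Type*} [CommRing R] [Fintype R] [DecidableEq R] [Fintype ι] [DecidableEq ι]
  {ψ : AddChar R ℂ}

lemma sum_dotProduct_eq_ite (hψ : IsPrimitive ψ) (a : ι → R) :
    ∑ x : ι → R, ψ (a ⬝ᵥ x) = if a = 0 then (Fintype.card R : ℂ) ^ Fintype.card ι else 0 := by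
  simp only [dotProduct, map_sum_eq_prod]
  rw [← Fintype.prod_sum fun i t => ψ (a i * t)]
  simp_rw [mul_comm (a _), sum_mulShift _ hψ]
  by_cases ha : a = 0
  · simp [ha]
  · obtain ⟨i, hi⟩ := Function.ne_iff.mp ha
    rw [if_neg ha]
    exact prod_eq_zero (mem_univ i) (by simpa using hi)

lemma sum_norm_sq_sum_dotProduct (hψ : IsPrimitive ψ) (F : Finset (ι → R)) :
    ∑ x, ‖∑ f ∈ F, ψ (f ⬝ᵥ x)‖ ^ 2 = Fintype.card R ^ Fintype.card ι * #F := by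
  have hpair (x : ι → R) : ((‖∑ f ∈ F, ψ (f ⬝ᵥ x)‖ ^ 2 : ℝ) : ℂ)
      = ∑ f ∈ F, ∑ g ∈ F, ψ ((f - g) ⬝ᵥ x) := by
    rw [Complex.ofReal_pow, ← Complex.mul_conj', map_sum, sum_mul_sum]
    simp_rw [sub_dotProduct, sub_eq_add_neg, map_add_eq_mul, map_neg_eq_conj]
  suffices h : ∑ x, ((‖∑ f ∈ F, ψ (f ⬝ᵥ x)‖ ^ 2 : ℝ) : ℂ)
      = Fintype.card R ^ Fintype.card ι * #F by exact_mod_cast h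
  simp_rw [hpair]
  rw [sum_comm]
  simp_rw [sum_comm (s := univ), sum_dotProduct_eq_ite hψ, sub_eq_zero, sum_ite_eq]
  simp [mul_comm]

lemma norm_sum_sum_dotProduct_sq_le (hψ : IsPrimitive ψ) (F G : Finset (ι → R)) :
    ‖∑ f ∈ F, ∑ g ∈ G, ψ (f ⬝ᵥ g)‖ ^ 2 ≤ Fintype.card R ^ Fintype.card ι * #F * #G := by
  calc ‖∑ f ∈ F, ∑ g ∈ G, ψ (f ⬝ᵥ g)‖ ^ 2
      ≤ (∑ g ∈ G, ‖∑ f ∈ F, ψ (f ⬝ᵥ g)‖) ^ 2 := by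
        rw [sum_comm]
        gcongr
        exact norm_sum_le _ _
    _ ≤ #G * ∑ g ∈ G, ‖∑ f ∈ F, ψ (f ⬝ᵥ g)‖ ^ 2 := sq_sum_le_card_mul_sum_sq
    _ ≤ #G * ∑ g, ‖∑ f ∈ F, ψ (f ⬝ᵥ g)‖ ^ 2 := by
        gcongr
        exact subset_univ G
    _ = Fintype.card R ^ Fintype.card ι * #F * #G := by
        rw [sum_norm_sq_sum_dotProduct hψ]
        ring

omit [DecidableEq ι] in
lemma sum_sum_mul_eq_card_mul_card_filter (hψ : IsPrimitive ψ) {α : Type*} (s : Finset α)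
    (h : α → R) :
    ∑ t, ∑ p ∈ s, ψ (t * h p) = Fintype.card R * #{p ∈ s | h p = 0} := by
  rw [sum_comm]
  simp_rw [sum_mulShift _ hψ]
  simp [sum_ite, mul_comm]

section Field

variable {K : Type*} [Field K] [Fintype K] [DecidableEq K] {ψ : AddChar K ℂ}

lemma norm_sum_product_mul_dotProduct_le (hψ : IsPrimitive ψ) (F : Finset (ι → K)) {t : K}
    (ht : t ≠ 0) :
    ‖∑ p ∈ F ×ˢ F, ψ (t * (p.1 ⬝ᵥ p.2))‖ ≤ √(Fintype.card K ^ Fintype.card ι) * #F := by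
  have hinj : Set.InjOn (t • · : (ι → K) → ι → K) F := fun _ _ _ _ h => smul_right_injective _ ht h
  have hscale : ∑ p ∈ F ×ˢ F, ψ (t * (p.1 ⬝ᵥ p.2))
      = ∑ f ∈ F, ∑ g ∈ F.image (t • ·), ψ (f ⬝ᵥ g) := by
    simp_rw [sum_product, sum_image hinj, dotProduct_smul, smul_eq_mul]
  rw [← pow_le_pow_iff_left₀ (norm_nonneg _) (by positivity) two_ne_zero, hscale, mul_pow,
    Real.sq_sqrt (by positivity)]
  calc _ ≤ (Fintype.card K : ℝ) ^ Fintype.card ι * #F * #(F.image (t • ·)) :=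
        norm_sum_sum_dotProduct_sq_le hψ _ _
    _ = _ := by rw [card_image_of_injOn hinj]; ring

lemma card_mul_card_filter_dotProduct_eq_zero_le (hψ : IsPrimitive ψ) (F : Finset (ι → K)) :
    (Fintype.card K : ℝ) * #{p ∈ F ×ˢ F | p.1 ⬝ᵥ p.2 = 0}
      ≤ #F ^ 2 + (Fintype.card K - 1) * √(Fintype.card K ^ Fintype.card ι) * #F := by
  have hsplit := sum_sum_mul_eq_card_mul_card_filter hψ (F ×ˢ F) fun p => p.1 ⬝ᵥ p.2
  rw [← sum_erase_add _ _ (mem_univ 0)] at hsplit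
  simp only [zero_mul, map_zero_eq_one, sum_const, card_product, nsmul_one] at hsplit
  have hnonzero : ‖∑ t ∈ univ.erase 0, ∑ p ∈ F ×ˢ F, ψ (t * (p.1 ⬝ᵥ p.2))‖
      ≤ (Fintype.card K - 1) * (√(Fintype.card K ^ Fintype.card ι) * #F) := by
    refine (norm_sum_le _ _).trans ?_
    refine (sum_le_card_nsmul _ _ _ fun t ht =>
      norm_sum_product_mul_dotProduct_le hψ F (ne_of_mem_erase ht)).trans_eq ?_
    rw [card_erase_of_mem (mem_univ _), card_univ, nsmul_eq_mul, Nat.cast_pred Fintype.card_pos]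
  calc (Fintype.card K : ℝ) * #{p ∈ F ×ˢ F | p.1 ⬝ᵥ p.2 = 0}
      = ‖(Fintype.card K : ℂ) * #{p ∈ F ×ˢ F | p.1 ⬝ᵥ p.2 = 0}‖ := by
        rw [norm_mul, Complex.norm_natCast, Complex.norm_natCast]
    _ ≤ _ := by
        rw [← hsplit]
        refine (norm_add_le _ _).trans ?_
        simp only [Nat.cast_mul, Complex.norm_natCast, norm_mul]
        nlinarith [hnonzero]

end Field

end AddChar

lemma le_div_of_mul_one_sub_mul_sq_le {k x K ε : ℝ} (hk : 1 < k) (hx : 0 ≤ x) (hK : 0 ≤ K)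
    (hε : ε < (k - 1) / k) (h : k * (1 - ε) * x ^ 2 ≤ x ^ 2 + (k - 1) * K * x) :
    x ≤ K / (1 - k / (k - 1) * ε) := by
  have hk1 : 0 < k - 1 := by linarith
  have hD : 0 < 1 - k / (k - 1) * ε := by
    rw [sub_pos, div_mul_eq_mul_div, div_lt_one hk1]
    rw [lt_div_iff₀ (by linarith)] at hε
    linarith
  rw [le_div_iff₀ hD]
  rcases hx.eq_or_lt with rfl | hx
  · simp [hK]
  have h' : k * (1 - ε) * x ≤ x + (k - 1) * K := by nlinarith
  have : x * (1 - k / (k - 1) * ε) * (k - 1) ≤ K * (k - 1) := by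
    field_simp
    linarith
  exact le_of_mul_le_mul_right this hk1

theorem stmt_8_general {k n : ℕ} (hk : Nat.Prime k)
    (F : Finset (Fin n → ZMod k)) (ε : ℝ)
    (hεk : ε < ((k : ℝ) - 1) / k)
    (hF : (((F ×ˢ F).filter fun p => ∑ r, p.1 r * p.2 r ≠ 0).card : ℝ)
      ≤ ε * (F.card : ℝ) ^ 2) :
    (F.card : ℝ) ≤ (k : ℝ) ^ ((n : ℝ) / 2) / (1 - ((k : ℝ) / ((k : ℝ) - 1)) * ε) := by
  have := Fact.mk hk
  have hzero := AddChar.card_mul_card_filter_dotProduct_eq_zero_le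
    (ZMod.isPrimitive_stdAddChar k) F
  rw [ZMod.card, Fintype.card_fin] at hzero
  have hpairs : (#{p ∈ F ×ˢ F | p.1 ⬝ᵥ p.2 = 0} : ℝ)
      + #{p ∈ F ×ˢ F | ∑ r, p.1 r * p.2 r ≠ 0} = #F ^ 2 := by
    rw [sq, ← Nat.cast_mul, ← card_product]
    exact_mod_cast card_filter_add_card_filter_not _
  have hsqrt : √((k : ℝ) ^ n) = (k : ℝ) ^ ((n : ℝ) / 2) := by
    rw [Real.sqrt_eq_rpow, ← Real.rpow_natCast, ← Real.rpow_mul (Nat.cast_nonneg k)]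
    ring_nf
  rw [← hsqrt]
  refine le_div_of_mul_one_sub_mul_sq_le (by exact_mod_cast hk.one_lt) (Nat.cast_nonneg _)
    (Real.sqrt_nonneg _) hεk ?_
  nlinarith

/-- Supersaturated `k`-town theorem for prime `k`: if at most `ε|F|²` ordered pairs of
vectors of `F` have nonzero scalar product and `ε < (k-1)/k`, then
`|F| ≤ k^(n/2) / (1 - (k/(k-1))·ε)`. -/
theorem stmt_8 {k n : ℕ} (hk : Nat.Prime k)
    (F : Finset (Fin n → ZMod k)) (ε : ℝ) (hε : 0 ≤ ε)
    (hεk : ε < ((k : ℝ) - 1) / k)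
    (hF : (((F ×ˢ F).filter fun p => ∑ r, p.1 r * p.2 r ≠ 0).card : ℝ)
      ≤ ε * (F.card : ℝ) ^ 2) :
    (F.card : ℝ) ≤ (k : ℝ) ^ ((n : ℝ) / 2) / (1 - ((k : ℝ) / ((k : ℝ) - 1)) * ε) :=
  stmt_8_general hk F ε hεk hF
end

section
/- Let k ≥ 2 be a squarefree integer. If F is a k-town family of vectors in (ℤ/kℤ)^n, then |F| ≤ k^{⌊n/2⌋}. -/
/-!
The span `W` of a town family over a finite field `K` is a totally isotropic subspace for the
dot product, so the dot product embeds `W` into its own annihilator; hence `2 dim W ≤ n` and the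
family has at most `|K| ^ ⌊n / 2⌋` members. The bound is preserved by products of rings, because a
family embeds into the product of its coordinate projections, which are again town families. For
squarefree `k` the Chinese remainder theorem splits `ℤ/kℤ` into a product of prime fields.
-/

open Matrix Module

section TownFamily

variable {ι R S : Type*} [Fintype ι] [CommRing R] [CommRing S]

def IsTownFamily (F : Finset (ι → R)) : Prop :=
  ∀ f₁ ∈ F, ∀ f₂ ∈ F, f₁ ⬝ᵥ f₂ = 0

def HasTownBound (ι R : Type*) [Fintype ι] [CommRing R] : Prop :=
  ∀ F : Finset (ι → R), IsTownFamily F → F.card ≤ Nat.card R ^ (Fintype.card ι / 2)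

lemma IsTownFamily.image_ringHom [DecidableEq S] {F : Finset (ι → R)} (hF : IsTownFamily F)
    (φ : R →+* S) : IsTownFamily (F.image (φ ∘ ·)) := by
  simp only [IsTownFamily, Finset.mem_image]
  rintro _ ⟨f₁, hf₁, rfl⟩ _ ⟨f₂, hf₂, rfl⟩
  rw [← RingHom.map_dotProduct, hF f₁ hf₁ f₂ hf₂, map_zero]

lemma finrank_span_le_of_isTownFamily {K : Type*} [Field K] {F : Finset (ι → K)}
    (hF : IsTownFamily F) :
    finrank K (Submodule.span K (F : Set (ι → K))) ≤ Fintype.card ι / 2 := by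
  classical
  set W := Submodule.span K (F : Set (ι → K))
  have hW : W.map (dotProductEquiv K ι : (ι → K) →ₗ[K] Dual K (ι → K)) ≤ W.dualAnnihilator := by
    rw [Submodule.map_span, Submodule.span_le, Submodule.coe_dualAnnihilator_span]
    rintro _ ⟨f, hf, rfl⟩ g hg
    exact hF f hf g hg
  have hle : finrank K W ≤ finrank K W.dualAnnihilator :=
    (LinearEquiv.finrank_map_eq _ W).symm.le.trans (Submodule.finrank_mono hW)
  have hsum : finrank K W + finrank K W.dualAnnihilator = Fintype.card ι := by
    rw [Subspace.finrank_add_finrank_dualAnnihilator_eq, finrank_fintype_fun_eq_card]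
  omega

lemma hasTownBound_of_field (K : Type*) [Field K] [Finite K] : HasTownBound ι K := by
  intro F hF
  set W := Submodule.span K (F : Set (ι → K))
  calc F.card = Nat.card (F : Set (ι → K)) := (Nat.card_eq_finsetCard F).symm
    _ ≤ Nat.card W := Nat.card_mono (Set.toFinite _) Submodule.subset_span
    _ = Nat.card K ^ finrank K W := natCard_eq_pow_finrank
    _ ≤ Nat.card K ^ (Fintype.card ι / 2) :=
      Nat.pow_le_pow_right Nat.card_pos (finrank_span_le_of_isTownFamily hF)

lemma HasTownBound.of_subsingleton [Subsingleton R] : HasTownBound ι R := fun F _ => by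
  simpa using F.card_le_one_of_subsingleton

lemma HasTownBound.of_ringEquiv (h : HasTownBound ι R) (e : R ≃+* S) : HasTownBound ι S := by
  classical
  intro F hF
  rw [← Nat.card_congr e.toEquiv, ← F.card_image_of_injective e.symm.injective.comp_left]
  exact h _ (hF.image_ringHom e.symm.toRingHom)

lemma HasTownBound.prod (hR : HasTownBound ι R) (hS : HasTownBound ι S) :
    HasTownBound ι (R × S) := by
  classical
  intro F hF
  set F₁ := F.image (RingHom.fst R S ∘ ·)
  set F₂ := F.image (RingHom.snd R S ∘ ·)
  have hmaps : Set.MapsTo (Equiv.arrowProdEquivProdArrow ι (fun _ => R) (fun _ => S)) F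
      (F₁ ×ˢ F₂ : Finset _) :=
    fun f hf => Finset.mem_coe.mpr <|
      Finset.mem_product.mpr ⟨F.mem_image_of_mem _ hf, F.mem_image_of_mem _ hf⟩
  calc F.card ≤ (F₁ ×ˢ F₂).card := Finset.card_le_card_of_injOn _ hmaps (Equiv.injective _).injOn
    _ = F₁.card * F₂.card := Finset.card_product _ _
    _ ≤ Nat.card R ^ (Fintype.card ι / 2) * Nat.card S ^ (Fintype.card ι / 2) :=
      Nat.mul_le_mul (hR _ (hF.image_ringHom _)) (hS _ (hF.image_ringHom _))
    _ = Nat.card (R × S) ^ (Fintype.card ι / 2) := by rw [Nat.card_prod, mul_pow]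

lemma hasTownBound_zmod {k : ℕ} (hk : Squarefree k) : HasTownBound ι (ZMod k) := by
  induction k using Nat.recOnPrimeCoprime with
  | zero => exact absurd hk not_squarefree_zero
  | prime_pow p n hp =>
    rcases Nat.eq_zero_or_pos n with rfl | hn
    · rw [pow_zero]
      exact .of_subsingleton
    · obtain rfl : n = 1 := ((Nat.squarefree_pow_iff hp.ne_one hn.ne').mp hk).2
      have : Fact p.Prime := ⟨hp⟩
      rw [pow_one]
      exact hasTownBound_of_field _
  | coprime a b _ _ hab iha ihb =>
    obtain ⟨-, ha, hb⟩ := Nat.squarefree_mul_iff.mp hk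
    exact ((iha ha).prod (ihb hb)).of_ringEquiv (ZMod.chineseRemainder hab).symm

end TownFamily

theorem stmt_10_general {k n : ℕ} (hsf : Squarefree k)
    (F : Finset (Fin n → ZMod k))
    (hF : ∀ f₁ ∈ F, ∀ f₂ ∈ F, ∑ r, f₁ r * f₂ r = 0) :
    F.card ≤ k ^ (n / 2) := by
  simpa only [Nat.card_zmod, Fintype.card_fin] using hasTownBound_zmod hsf F hF

/-- For squarefree `k ≥ 2`, a `k`-town family `F ⊆ (ℤ/kℤ)^n` (all pairwise, including self,
scalar products vanish) satisfies `|F| ≤ k^⌊n/2⌋`. -/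
theorem stmt_10 {k n : ℕ} (hk : 2 ≤ k) (hsf : Squarefree k)
    (F : Finset (Fin n → ZMod k))
    (hF : ∀ f₁ ∈ F, ∀ f₂ ∈ F, ∑ r, f₁ r * f₂ r = 0) :
    F.card ≤ k ^ (n / 2) :=
  stmt_10_general hsf F hF
end

section
/- Let m ≥ 2 be an integer and k = m². Then the set F of all vectors in (ℤ/kℤ)^n every coordinate of which is divisible by m is a k-town family with |F| = m^n = k^{n/2}. In particular, for k a perfect square the bound k^{n/2} on the size of a k-town family is attained for every n, including odd n. -/
/-- For `k = m²` a perfect square, the family `F` of all vectors in `(ℤ/kℤ)^n` whose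
coordinates are all divisible by `m` is a `k`-town family of size `m^n = k^(n/2)`;
so for square `k` the bound `k^(n/2)` is attained for every `n`, including odd `n`. -/
theorem stmt_11 {m n k : ℕ} (hm : 2 ≤ m) (hk : k = m ^ 2)
    (F : Finset (Fin n → ZMod k))
    (hF : ∀ v : Fin n → ZMod k, v ∈ F ↔ ∀ r, (m : ZMod k) ∣ v r) :
    (∀ f₁ ∈ F, ∀ f₂ ∈ F, ∑ r, f₁ r * f₂ r = 0) ∧
      F.card = m ^ n ∧ (F.card : ℝ) = (k : ℝ) ^ ((n : ℝ) / 2) := by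
  have hmpos : 0 < m := by omega
  have hkpos : 0 < k := by subst hk; positivity
  haveI : NeZero k := ⟨hkpos.ne'⟩
  have hm2 : (m : ZMod k) * (m : ZMod k) = 0 := by
    have : ((m * m : ℕ) : ZMod k) = 0 := by
      rw [show m * m = k by rw [hk]; ring]
      exact ZMod.natCast_self k
    push_cast at this; exact this
  constructor
  · intro f₁ h₁ f₂ h₂
    refine Finset.sum_eq_zero fun r _ => ?_
    obtain ⟨a, ha⟩ := (hF f₁).1 h₁ r
    obtain ⟨b, hb⟩ := (hF f₂).1 h₂ r
    rw [ha, hb]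
    calc (m : ZMod k) * a * ((m : ZMod k) * b)
        = (m : ZMod k) * (m : ZMod k) * (a * b) := by ring
      _ = 0 := by rw [hm2, zero_mul]
  · -- cardinality
    have hcard : F.card = m ^ n := by
      have : F = Finset.image
          (fun g : Fin n → Fin m => fun r => ((m * (g r : ℕ) : ℕ) : ZMod k))
          Finset.univ := by
        ext v
        rw [hF, Finset.mem_image]
        constructor
        · intro hv
          choose c hc using hv
          refine ⟨fun r => ⟨(c r).val % m, Nat.mod_lt _ hmpos⟩, Finset.mem_univ _, ?_⟩
          funext r
          have hmodeq : m * ((c r).val % m) ≡ m * (c r).val [MOD m * m] :=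
            (Nat.mod_modEq ((c r).val) m).mul_left' m
          have : ((m * ((c r).val % m) : ℕ) : ZMod k) = ((m * (c r).val : ℕ) : ZMod k) := by
            rw [ZMod.natCast_eq_natCast_iff]
            simpa [hk, sq] using hmodeq
          rw [this]
          push_cast
          rw [ZMod.natCast_val, ZMod.cast_id]
          exact (hc r).symm
        · rintro ⟨g, -, rfl⟩ r
          exact ⟨((g r : ℕ) : ZMod k), by push_cast; ring⟩
      rw [this, Finset.card_image_of_injective _ ?_, Finset.card_univ,
        Fintype.card_fun, Fintype.card_fin, Fintype.card_fin]
      intro g₁ g₂ h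
      funext r
      have hr := congrFun h r
      have hlt : ∀ i : Fin m, m * (i : ℕ) < k := by
        intro i
        calc m * (i : ℕ) < m * m := by
              exact (Nat.mul_lt_mul_left hmpos).2 i.2
          _ = k := by rw [hk]; ring
      have := (ZMod.natCast_eq_natCast_iff' _ _ _).1 hr
      rw [Nat.mod_eq_of_lt (hlt _), Nat.mod_eq_of_lt (hlt _)] at this
      exact Fin.ext (Nat.eq_of_mul_eq_mul_left hmpos this)
    refine ⟨hcard, ?_⟩
    rw [hcard, hk]
    push_cast
    rw [← Real.rpow_natCast (m : ℝ) n, ← Real.rpow_natCast (m : ℝ) 2,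
      ← Real.rpow_mul (by positivity)]
    congr 1
    ring
end

section
/- Let k ≥ 2, let t ∈ ℤ/kℤ, and let F be a set of vectors in (ℤ/kℤ)^n such that (f₁, f₂) = t for every f₁, f₂ ∈ F (including f₁ = f₂). Then |F| ≤ k^{n/2}. -/
/-!
Translating `F` by one of its elements `f₀` turns the hypothesis into isotropy: the differences
`f - f₀` are pairwise orthogonal, hence so is the subgroup `H` they generate, and `|F| ≤ |H|`.
For an isotropic subgroup `H ≤ (ℤ/kℤ)ⁿ` and a primitive additive character `ψ`, count
`∑ₓ ∑_{h ∈ H} ψ(h ⬝ x)` in two ways: summing over `x` first only `h = 0` survives, giving `kⁿ`;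
summing over `h` first gives `|H|` times the number of `x` on which `h ↦ ψ(h ⬝ x)` is trivial,
and every `x ∈ H` is such. Hence `kⁿ ≥ |H|²`.
-/

open Finset Matrix

lemma AddChar.map_sum_eq_prod_s12 {A M ι : Type*} [AddCommMonoid A] [CommMonoid M]
    (ψ : AddChar A M) (s : Finset ι) (f : ι → A) :
    ψ (∑ i ∈ s, f i) = ∏ i ∈ s, ψ (f i) :=
  map_prod ψ.toMonoidHom (fun i => Multiplicative.ofAdd (f i)) s

section DotProduct

variable {R ι : Type*} [CommRing R] [Fintype ι]

def dotProductOrthogonal (S : Set (ι → R)) : AddSubgroup (ι → R) where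
  carrier := {y | ∀ x ∈ S, x ⬝ᵥ y = 0}
  zero_mem' := by simp
  add_mem' hy hz x hx := by rw [dotProduct_add, hy x hx, hz x hx, add_zero]
  neg_mem' hy x hx := by rw [dotProduct_neg, hy x hx, neg_zero]

lemma dotProduct_eq_zero_of_mem_closure {S : Set (ι → R)} (hS : ∀ x ∈ S, ∀ y ∈ S, x ⬝ᵥ y = 0)
    {x y : ι → R} (hx : x ∈ AddSubgroup.closure S) (hy : y ∈ AddSubgroup.closure S) :
    x ⬝ᵥ y = 0 := by
  have hS_le : AddSubgroup.closure S ≤ dotProductOrthogonal S :=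
    (AddSubgroup.closure_le _).2 fun y hy x hx => hS x hx y hy
  have hclosure_le : AddSubgroup.closure S ≤ dotProductOrthogonal (AddSubgroup.closure S) :=
    (AddSubgroup.closure_le _).2 fun s hs z hz => by rw [dotProduct_comm]; exact hS_le hz s hs
  exact hclosure_le hy x hx

variable [Fintype R] {R' : Type*} [CommRing R'] [IsDomain R'] {ψ : AddChar R R'}

theorem AddChar.sum_dotProduct_eq_ite_s12 [DecidableEq R] [DecidableEq ι] (hψ : ψ.IsPrimitive)
    (v : ι → R) :
    ∑ x : ι → R, ψ (v ⬝ᵥ x) = if v = 0 then (Fintype.card R : R') ^ Fintype.card ι else 0 := by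
  calc ∑ x : ι → R, ψ (v ⬝ᵥ x) = ∏ i, ∑ y : R, ψ (y * v i) := by
        simp only [dotProduct, ψ.map_sum_eq_prod_s12, Fintype.prod_sum, mul_comm]
    _ = ∏ i, if v i = 0 then (Fintype.card R : R') else 0 := by
        simp only [AddChar.sum_mulShift _ hψ, Nat.cast_ite, Nat.cast_zero]
    _ = _ := by simp [Fintype.prod_ite_zero, funext_iff]

theorem AddSubgroup.card_sq_le_of_dotProduct_eq_zero [CharZero R'] (hψ : ψ.IsPrimitive)
    (H : AddSubgroup (ι → R)) (hH : ∀ x ∈ H, ∀ y ∈ H, x ⬝ᵥ y = 0) :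
    Nat.card H ^ 2 ≤ Fintype.card R ^ Fintype.card ι := by
  classical
  let χ (x : ι → R) : AddChar H R' :=
    ψ.compAddMonoidHom (AddMonoidHom.mk' (fun h : H => (h : ι → R) ⬝ᵥ x)
      fun _ _ => add_dotProduct _ _ _)
  have hχ : ∀ x (h : H), χ x h = ψ ((h : ι → R) ⬝ᵥ x) := fun _ _ => rfl
  have hdouble : ∑ x : ι → R, ∑ h : H, χ x h = (Fintype.card R : R') ^ Fintype.card ι := by
    simp only [hχ]
    rw [Finset.sum_comm]
    simp [AddChar.sum_dotProduct_eq_ite_s12 hψ]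
  have hcount :
      Fintype.card R ^ Fintype.card ι = Fintype.card H * Fintype.card {x // χ x = 0} := by
    apply Nat.cast_injective (R := R')
    push_cast
    rw [← hdouble]
    simp only [AddChar.sum_eq_ite]
    simp [Finset.sum_ite, Fintype.card_subtype, mul_comm]
  have hH_le : Fintype.card H ≤ Fintype.card {x // χ x = 0} :=
    Fintype.card_subtype_mono _ _ fun x hx => by
      ext h
      simp [hχ, hH h h.2 x hx]
  rw [Nat.card_eq_fintype_card, hcount, sq]
  exact Nat.mul_le_mul_left _ hH_le

end DotProduct

/-- If all pairwise (including self) scalar products of vectors of `F ⊆ (ℤ/kℤ)^n`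
equal a fixed `t ∈ ℤ/kℤ`, then `|F| ≤ k^(n/2)`. -/
theorem stmt_12 {k n : ℕ} (hk : 2 ≤ k) (t : ZMod k)
    (F : Finset (Fin n → ZMod k))
    (hF : ∀ f₁ ∈ F, ∀ f₂ ∈ F, ∑ r, f₁ r * f₂ r = t) :
    (F.card : ℝ) ≤ (k : ℝ) ^ ((n : ℝ) / 2) := by
  have hk₀ : NeZero k := ⟨by omega⟩
  rcases F.eq_empty_or_nonempty with rfl | ⟨f₀, hf₀⟩
  · simp only [Finset.card_empty, Nat.cast_zero]
    positivity
  set D : Set (Fin n → ZMod k) := (· - f₀) '' F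
  have hD : ∀ x ∈ D, ∀ y ∈ D, x ⬝ᵥ y = 0 := by
    rintro _ ⟨f, hf, rfl⟩ _ ⟨g, hg, rfl⟩
    have hF' : ∀ f₁ ∈ F, ∀ f₂ ∈ F, f₁ ⬝ᵥ f₂ = t := hF
    rw [sub_dotProduct, dotProduct_sub, dotProduct_sub, hF' f hf g hg, hF' f hf f₀ hf₀,
      hF' f₀ hf₀ g hg, hF' f₀ hf₀ f₀ hf₀, sub_self]
  have hFD : F.card ≤ Nat.card (AddSubgroup.closure D) :=
    calc F.card = D.ncard := by
          rw [Set.ncard_image_of_injective _ sub_left_injective, Set.ncard_coe_finset]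
      _ ≤ (AddSubgroup.closure D : Set (Fin n → ZMod k)).ncard :=
          Set.ncard_le_ncard AddSubgroup.subset_closure
      _ = Nat.card (AddSubgroup.closure D) := (Nat.card_coe_set_eq _).symm
  have hsq : F.card ^ 2 ≤ k ^ n := by
    have := (AddSubgroup.closure D).card_sq_le_of_dotProduct_eq_zero
      (ZMod.isPrimitive_stdAddChar k) fun x hx y hy => dotProduct_eq_zero_of_mem_closure hD hx hy
    simp only [ZMod.card, Fintype.card_fin] at this
    exact (Nat.pow_le_pow_left hFD 2).trans this
  rw [Real.rpow_div_two_eq_sqrt _ (by positivity), Real.rpow_natCast,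
    ← pow_le_pow_iff_left₀ (by positivity) (by positivity) two_ne_zero, ← pow_mul, mul_comm,
    pow_mul, Real.sq_sqrt (by positivity)]
  exact_mod_cast hsq
end

section
/- Let G = (V,E) be a finite simple graph and let A be a complex matrix with rows and columns indexed by V such that A_{ij} = 1 for every pair {i,j} that is not an edge of G (including the diagonal entries A_{ii} = 1). Then α(G) ≤ σ_max(A), where σ_max(A) is the largest singular value of A, i.e. the square root of the largest eigenvalue of A*A (A* being the conjugate transpose of A). -/
/-!
Test the quadratic form of `AᴴA` on the indicator vector `u` of the independent set `I`.
Every row of `A` indexed by `I` sums to `|I|` over `I`, so `‖A u‖² ≥ |I| · |I|²`, while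
`‖A u‖² = ⟪u, AᴴA u⟫ ≤ λ_max(AᴴA) ‖u‖² = λ_max(AᴴA) |I|`. Hence `|I|² ≤ λ_max(AᴴA)`.
-/

open Matrix Finset
open scoped MatrixOrder

namespace Matrix.IsHermitian

variable {𝕜 n : Type*} [RCLike 𝕜] [Fintype n] [DecidableEq n] {M : Matrix n n 𝕜}

theorem le_algebraMap_iSup_eigenvalues (hM : M.IsHermitian) :
    M ≤ algebraMap ℝ _ (⨆ i, hM.eigenvalues i) := by
  refine le_algebraMap_of_spectrum_le fun r hr => ?_
  rw [hM.spectrum_real_eq_range_eigenvalues] at hr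
  obtain ⟨i, rfl⟩ := hr
  exact le_ciSup (Set.finite_range _).bddAbove i

theorem re_dotProduct_mulVec_le_iSup_eigenvalues (hM : M.IsHermitian) (x : n → 𝕜) :
    RCLike.re (star x ⬝ᵥ M *ᵥ x) ≤ (⨆ i, hM.eigenvalues i) * RCLike.re (star x ⬝ᵥ x) := by
  have := (Matrix.le_iff.mp hM.le_algebraMap_iSup_eigenvalues).re_dotProduct_nonneg x
  simpa [sub_mulVec, dotProduct_sub, Algebra.algebraMap_eq_smul_one, smul_mulVec,
    dotProduct_smul, RCLike.smul_re] using this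

end Matrix.IsHermitian

section Indicator

variable {𝕜 V : Type*} [RCLike 𝕜] [Fintype V] [DecidableEq V]

theorem re_star_indicator_dotProduct_self (I : Finset V) :
    RCLike.re (star ((I : Set V).indicator 1) ⬝ᵥ (I : Set V).indicator (1 : V → 𝕜)) = #I := by
  simp [dotProduct, Set.indicator_apply, apply_ite]

theorem mulVec_indicator_one_apply (A : Matrix V V 𝕜) (I : Finset V) (i : V) :
    (A *ᵥ (I : Set V).indicator 1) i = ∑ j ∈ I, A i j := by
  simp [mulVec, dotProduct, Set.indicator_apply]

theorem card_pow_three_le_re_star_mulVec_indicator_dotProduct {A : Matrix V V 𝕜}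
    {I : Finset V} (hA : ∀ i ∈ I, ∀ j ∈ I, A i j = 1) :
    (#I : ℝ) ^ 3 ≤
      RCLike.re (star (A *ᵥ (I : Set V).indicator 1) ⬝ᵥ A *ᵥ (I : Set V).indicator 1) := by
  set v := A *ᵥ (I : Set V).indicator 1
  have hv : ∀ i ∈ I, v i = #I := fun i hi => by
    simp [v, mulVec_indicator_one_apply, sum_congr rfl (hA i hi)]
  calc (#I : ℝ) ^ 3 = ∑ i ∈ I, RCLike.normSq (v i) := by
        rw [sum_congr rfl fun i hi => by rw [hv i hi, RCLike.normSq_eq_def', RCLike.norm_natCast]]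
        simp only [sum_const, nsmul_eq_mul]
        ring
    _ ≤ ∑ i, RCLike.normSq (v i) :=
        sum_le_sum_of_subset_of_nonneg (subset_univ I) fun i _ _ => RCLike.normSq_nonneg _
    _ = RCLike.re (star v ⬝ᵥ v) := by
        simp [dotProduct, RCLike.normSq_eq_def', RCLike.conj_mul]

end Indicator

theorem stmt_15_general {V : Type*} [Fintype V] [DecidableEq V]
    (G : SimpleGraph V) (A : Matrix V V ℂ)
    (h1 : ∀ i j : V, ¬ G.Adj i j → A i j = 1)
    (I : Finset V) (hI : ∀ i ∈ I, ∀ j ∈ I, ¬ G.Adj i j) :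
    (I.card : ℝ) ≤
      Real.sqrt (⨆ i, (Matrix.isHermitian_conjTranspose_mul_self A).eigenvalues i) := by
  set u : V → ℂ := (I : Set V).indicator 1
  set lam := ⨆ i, (Matrix.isHermitian_conjTranspose_mul_self A).eigenvalues i
  have hlower : (#I : ℝ) ^ 3 ≤ RCLike.re (star u ⬝ᵥ (Aᴴ * A) *ᵥ u) := by
    rw [← mulVec_mulVec, dotProduct_mulVec, ← star_mulVec]
    exact card_pow_three_le_re_star_mulVec_indicator_dotProduct fun i hi j hj =>
      h1 i j (hI i hi j hj)
  have hupper : RCLike.re (star u ⬝ᵥ (Aᴴ * A) *ᵥ u) ≤ lam * #I := by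
    rw [← re_star_indicator_dotProduct_self (𝕜 := ℂ) I]
    exact (isHermitian_conjTranspose_mul_self A).re_dotProduct_mulVec_le_iSup_eigenvalues u
  rcases (#I).eq_zero_or_pos with hI0 | hpos
  · simp [hI0]
  · have hIpos : (0 : ℝ) < #I := by exact_mod_cast hpos
    exact Real.le_sqrt_of_sq_le (by nlinarith)

/-- Singular-value version of the Lovász bound: for a complex matrix `A` with `A i j = 1`
on all non-edges (including the diagonal), every independent set `I` of `G` satisfies
`|I| ≤ σ_max(A) = √(λ_max(AᴴA))`. -/
theorem stmt_15 {V : Type*} [Fintype V] [DecidableEq V] [Nonempty V]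
    (G : SimpleGraph V) (A : Matrix V V ℂ)
    (h1 : ∀ i j : V, ¬ G.Adj i j → A i j = 1)
    (I : Finset V) (hI : ∀ i ∈ I, ∀ j ∈ I, ¬ G.Adj i j) :
    (I.card : ℝ) ≤
      Real.sqrt (⨆ i, (Matrix.isHermitian_conjTranspose_mul_self A).eigenvalues i) :=
  stmt_15_general G A h1 I hI
end

section
/- Let A be the 2×2 matrix with rows (1,1) and (1,−1), let M = A^{⊗n} be its n-fold Kronecker power with rows and columns indexed by {0,1}^n, and let I, J ⊆ {0,1}^n. Then ( Σ_{i ∈ I} Σ_{j ∈ J} M_{ij} )² ≤ 2^n · |I| · |J| ≤ 2^{3n}. -/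
/-- Discrepancy bound: for the `n`-fold Kronecker power `M` of the 2×2 Hadamard matrix
and any `I, J ⊆ {0,1}^n`, one has `(∑_{i∈I} ∑_{j∈J} M_{ij})² ≤ 2^n |I| |J| ≤ 2^{3n}`. -/
theorem stmt_17 {n : ℕ}
    (A : Matrix (Fin 2) (Fin 2) ℝ) (hA : A = !![1, 1; 1, -1])
    (M : Matrix (Fin n → Fin 2) (Fin n → Fin 2) ℝ)
    (hM : ∀ s t : Fin n → Fin 2, M s t = ∏ r, A (s r) (t r))
    (I J : Finset (Fin n → Fin 2)) :
    (∑ i ∈ I, ∑ j ∈ J, M i j) ^ 2 ≤ 2 ^ n * (I.card : ℝ) * (J.card : ℝ) ∧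
      2 ^ n * (I.card : ℝ) * (J.card : ℝ) ≤ 2 ^ (3 * n) := by
  have hcol : ∀ a b : Fin 2, ∑ x : Fin 2, A x a * A x b = if a = b then (2:ℝ) else 0 := by
    intro a b
    fin_cases a <;> fin_cases b <;> simp [hA, Fin.sum_univ_two] <;> norm_num
  have key : ∀ j j' : Fin n → Fin 2,
      ∑ i : Fin n → Fin 2, M i j * M i j' = if j = j' then (2:ℝ)^n else 0 := by
    intro j j'
    have h1 : ∑ i : Fin n → Fin 2, M i j * M i j'
        = ∏ r, ∑ x : Fin 2, A x (j r) * A x (j' r) := by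
      rw [Fintype.prod_sum (fun r x => A x (j r) * A x (j' r))]
      refine Finset.sum_congr rfl fun i _ => ?_
      rw [hM, hM, ← Finset.prod_mul_distrib]
    rw [h1]
    by_cases h : j = j'
    · subst h
      simp [hcol]
    · obtain ⟨r, hr⟩ := Function.ne_iff.mp h
      rw [if_neg h]
      exact Finset.prod_eq_zero (Finset.mem_univ r) (by rw [hcol, if_neg hr])
    -- done with key
  set f : (Fin n → Fin 2) → ℝ := fun i => ∑ j ∈ J, M i j with hf
  have h2 : ∑ i : Fin n → Fin 2, f i ^ 2 = (2:ℝ)^n * J.card := by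
    calc ∑ i : Fin n → Fin 2, f i ^ 2
        = ∑ i : Fin n → Fin 2, ∑ j ∈ J, ∑ j' ∈ J, M i j * M i j' := by
          refine Finset.sum_congr rfl fun i _ => ?_
          rw [hf, sq, Finset.sum_mul_sum]
      _ = ∑ j ∈ J, ∑ j' ∈ J, ∑ i : Fin n → Fin 2, M i j * M i j' := by
          rw [Finset.sum_comm]
          exact Finset.sum_congr rfl fun j _ => Finset.sum_comm
      _ = ∑ j ∈ J, (2:ℝ)^n := by
          refine Finset.sum_congr rfl fun j hj => ?_
          simp_rw [key]
          rw [Finset.sum_ite_eq J j (fun _ => (2:ℝ)^n), if_pos hj]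
      _ = (2:ℝ)^n * J.card := by rw [Finset.sum_const, nsmul_eq_mul, mul_comm]
  have hIle : (I.card : ℝ) ≤ 2 ^ n := by
    have := Finset.card_le_univ I
    have h := this.trans_eq (by simp [Fintype.card_fun] : Fintype.card (Fin n → Fin 2) = 2 ^ n)
    exact_mod_cast h
  have hJle : (J.card : ℝ) ≤ 2 ^ n := by
    have := Finset.card_le_univ J
    have h := this.trans_eq (by simp [Fintype.card_fun] : Fintype.card (Fin n → Fin 2) = 2 ^ n)
    exact_mod_cast h
  constructor
  · have cs : (∑ i ∈ I, f i) ^ 2 ≤ I.card * ∑ i ∈ I, f i ^ 2 :=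
      sq_sum_le_card_mul_sum_sq
    have hmono : ∑ i ∈ I, f i ^ 2 ≤ ∑ i : Fin n → Fin 2, f i ^ 2 :=
      Finset.sum_le_sum_of_subset_of_nonneg (Finset.subset_univ I)
        (fun i _ _ => sq_nonneg _)
    calc (∑ i ∈ I, ∑ j ∈ J, M i j) ^ 2 = (∑ i ∈ I, f i) ^ 2 := rfl
      _ ≤ I.card * ∑ i ∈ I, f i ^ 2 := cs
      _ ≤ I.card * ∑ i : Fin n → Fin 2, f i ^ 2 := by
          exact mul_le_mul_of_nonneg_left hmono (by positivity)
      _ = I.card * ((2:ℝ)^n * J.card) := by rw [h2]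
      _ = 2 ^ n * (I.card : ℝ) * (J.card : ℝ) := by ring
  · have : (2:ℝ) ^ (3 * n) = 2 ^ n * (2:ℝ)^n * (2:ℝ)^n := by
      rw [← pow_add, ← pow_add]; ring_nf
    rw [this]
    have h1 : (0:ℝ) ≤ I.card := Nat.cast_nonneg _
    have h2' : (0:ℝ) ≤ J.card := Nat.cast_nonneg _
    have hp : (0:ℝ) ≤ 2 ^ n := by positivity
    gcongr
end

section
/- Let k ≥ 2, let φ = e^{2πi/k} be a primitive k-th root of unity, and let A be the k×k complex matrix with entries A_{jl} = φ^{jl} for 0 ≤ j, l ≤ k−1. Then there exists an orthonormal basis of ℂ^k consisting of eigenvectors of A all of whose coordinates are real. -/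
/-!
Write `A = M + iN` with `M = Re A` and `N = Im A` real. Since `A` is symmetric, `Aᴴ` is the
entrywise conjugate of `A`, so `M = (A + Aᴴ) / 2` and `N = (A - Aᴴ) / 2i` are real symmetric
matrices, and they commute as soon as `A` is normal. The character matrix satisfies
`A Aᴴ = k • 1` by the orthogonality of the characters of `ℤ/k`, hence is normal. Two commuting
real symmetric matrices have a common orthonormal eigenbasis of `ℝ^k`; each of its vectors is an
eigenvector of `A = M + iN`, and viewed in `ℂ^k` these real vectors stay orthonormal.
-/

open Matrix Complex ComplexConjugate

section JointEigenbasis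

variable {𝕜 E : Type*} [RCLike 𝕜] [NormedAddCommGroup E] [InnerProductSpace 𝕜 E]
  [FiniteDimensional 𝕜 E] {ι : Type*} [Fintype ι]

theorem DirectSum.IsInternal.exists_orthonormalBasis_forall_exists_mem {κ : Type*}
    [DecidableEq κ] {V : κ → Submodule 𝕜 E} (hV : DirectSum.IsInternal V)
    (hV' : OrthogonalFamily 𝕜 (fun i => V i) fun i => (V i).subtypeₗᵢ)
    (hι : Module.finrank 𝕜 E = Fintype.card ι) :
    ∃ b : OrthonormalBasis ι 𝕜 E, ∀ a, ∃ i, b a ∈ V i := by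
  -- only finitely many of the `V i` are nonzero, and they still form an internal direct sum
  let := hV.submodule_iSupIndep.fintypeNeBotOfFiniteDimensional
  have hW := DirectSum.isInternal_ne_bot_iff.2 hV
  have hW' := hV'.comp (Subtype.val_injective (p := fun i => V i ≠ ⊥))
  refine ⟨(hW.subordinateOrthonormalBasis hι hW').reindex (Fintype.equivFin ι).symm,
    fun a => ⟨(hW.subordinateOrthonormalBasisIndex hι (Fintype.equivFin ι a) hW').1, ?_⟩⟩
  rw [OrthonormalBasis.reindex_apply]
  exact hW.subordinateOrthonormalBasis_subordinate hι _ hW'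

theorem LinearMap.IsSymmetric.exists_orthonormalBasis_mem_eigenspace_inf_eigenspace
    {S T : E →ₗ[𝕜] E} (hS : S.IsSymmetric) (hT : T.IsSymmetric) (hST : Commute S T)
    (hι : Module.finrank 𝕜 E = Fintype.card ι) :
    ∃ b : OrthonormalBasis ι 𝕜 E,
      ∀ a, ∃ μ ν : 𝕜, b a ∈ Module.End.eigenspace S μ ⊓ Module.End.eigenspace T ν := by
  classical
  obtain ⟨b, hb⟩ := DirectSum.IsInternal.exists_orthonormalBasis_forall_exists_mem
    (hS.directSum_isInternal_of_commute hT hST)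
    (hS.orthogonalFamily_eigenspace_inf_eigenspace hT) hι
  exact ⟨b, fun a => let ⟨μ, hμ⟩ := hb a; ⟨μ.2, μ.1, hμ⟩⟩

end JointEigenbasis

section RealEigenvectors

variable {n : Type*} [Fintype n] [DecidableEq n]

theorem Matrix.IsHermitian.exists_orthonormalBasis_mulVec_eq_smul_of_commute {𝕜 : Type*}
    [RCLike 𝕜] {M N : Matrix n n 𝕜} (hM : M.IsHermitian) (hN : N.IsHermitian)
    (hMN : Commute M N) :
    ∃ b : OrthonormalBasis n 𝕜 (EuclideanSpace 𝕜 n),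
      ∀ i, ∃ μ ν : 𝕜, M *ᵥ b i = μ • b i ∧ N *ᵥ b i = ν • b i := by
  obtain ⟨b, hb⟩ :=
    (isSymmetric_toEuclideanLin_iff.2 hM).exists_orthonormalBasis_mem_eigenspace_inf_eigenspace
      (isSymmetric_toEuclideanLin_iff.2 hN) (hMN.map (toLpLinAlgEquiv 2 (R := 𝕜) (n := n)))
      finrank_euclideanSpace
  refine ⟨b, fun i => ?_⟩
  obtain ⟨μ, ν, hμ, hν⟩ := hb i
  rw [SetLike.mem_coe, Module.End.mem_eigenspace_iff] at hμ hν
  exact ⟨μ, ν, congrArg WithLp.ofLp hμ, congrArg WithLp.ofLp hν⟩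

omit [Fintype n] [DecidableEq n] in
theorem Matrix.map_re_add_I_smul_map_im (A : Matrix n n ℂ) :
    (A.map re).map ofRealHom + I • (A.map im).map ofRealHom = A := by
  ext i j
  simp [mul_comm I]

theorem Matrix.commute_map_re_map_im {A : Matrix n n ℂ} (hA : Aᵀ = A) (hAA : Commute A Aᴴ) :
    Commute (A.map re) (A.map im) := by
  have hAH : Aᴴ = A.map star := congrArg (map · star) hA
  have hre : (A.map re).map ofRealHom = (2⁻¹ : ℂ) • (A + Aᴴ) := by
    ext i j; simp [hAH, re_eq_add_conj, div_eq_inv_mul]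
  have him : (A.map im).map ofRealHom = (2 * I)⁻¹ • (A - Aᴴ) := by
    ext i j; simp [hAH, im_eq_sub_conj, div_eq_inv_mul]
  refine Commute.of_map (f := (RingHom.mapMatrix ofRealHom : Matrix n n ℝ →+* _))
    (Matrix.map_injective ofReal_injective) ?_
  change Commute ((A.map re).map ofRealHom) ((A.map im).map ofRealHom)
  rw [hre, him]
  exact (((Commute.refl A).sub_right hAA).add_left (hAA.symm.sub_right (.refl _))).smul_left _
    |>.smul_right _

theorem OrthonormalBasis.orthonormal_ofReal (b : OrthonormalBasis n ℝ (EuclideanSpace ℝ n)) :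
    Orthonormal ℂ fun i => WithLp.toLp 2 fun l => (b i l : ℂ) := by
  rw [orthonormal_iff_ite]
  intro i j
  have hb := orthonormal_iff_ite.1 b.orthonormal i j
  rw [PiLp.inner_apply] at hb ⊢
  simp only [RCLike.inner_apply, conj_ofReal, conj_trivial] at hb ⊢
  rw [← ofReal_one, ← ofReal_zero, ← apply_ite, ← hb]
  push_cast
  rfl

omit [DecidableEq n] in
theorem Orthonormal.span_range_ofLp_eq_top {𝕜 : Type*} [RCLike 𝕜] {w : n → EuclideanSpace 𝕜 n}
    (hw : Orthonormal 𝕜 w) : Submodule.span 𝕜 (Set.range fun i => (w i).ofLp) = ⊤ :=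
  (hw.linearIndependent.map' (WithLp.linearEquiv 2 𝕜 (n → 𝕜)).toLinearMap
    (WithLp.linearEquiv 2 𝕜 (n → 𝕜)).ker).span_eq_top_of_card_eq_finrank'
    (Module.finrank_fintype_fun_eq_card 𝕜).symm

theorem Matrix.exists_real_orthonormal_eigenvectors_of_transpose_eq_of_commute
    {A : Matrix n n ℂ} (hA : Aᵀ = A) (hAA : Commute A Aᴴ) :
    ∃ v : n → n → ℂ,
      Submodule.span ℂ (Set.range v) = ⊤ ∧
      (∀ i j : n, ∑ l, conj (v i l) * v j l = if i = j then 1 else 0) ∧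
      (∀ i, ∃ μ : ℂ, A *ᵥ v i = μ • v i) ∧
      (∀ i l, (v i l).im = 0) := by
  have hre : (A.map re).IsHermitian := by
    rw [IsHermitian, conjTranspose_eq_transpose_of_trivial, ← transpose_map, hA]
  have him : (A.map im).IsHermitian := by
    rw [IsHermitian, conjTranspose_eq_transpose_of_trivial, ← transpose_map, hA]
  obtain ⟨b, hb⟩ := hre.exists_orthonormalBasis_mulVec_eq_smul_of_commute him
    (commute_map_re_map_im hA hAA)
  have hon := b.orthonormal_ofReal
  refine ⟨fun i l => (b i l : ℂ), hon.span_range_ofLp_eq_top, fun i j => ?_, fun i => ?_,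
    fun i l => ofReal_im _⟩
  · simpa [PiLp.inner_apply, mul_comm] using orthonormal_iff_ite.1 hon i j
  · obtain ⟨μ, ν, hμ, hν⟩ := hb i
    refine ⟨μ + I * ν, ?_⟩
    have hmap (P : Matrix n n ℝ) (x : n → ℝ) :
        P.map ofRealHom *ᵥ (fun l => (x l : ℂ)) = fun l => ((P *ᵥ x) l : ℂ) :=
      funext fun l => (RingHom.map_mulVec ofRealHom P x l).symm
    conv_lhs => rw [← A.map_re_add_I_smul_map_im]
    rw [add_mulVec, smul_mulVec, hmap, hmap, hμ, hν]
    ext l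
    simp only [Pi.add_apply, Pi.smul_apply, smul_eq_mul, ofReal_mul]
    ring

end RealEigenvectors

theorem IsPrimitiveRoot.sum_pow_mul_conj_pow {ζ : ℂ} {k : ℕ} (hζ : IsPrimitiveRoot ζ k)
    (j m : Fin k) :
    ∑ l : Fin k, ζ ^ ((j : ℕ) * l) * conj (ζ ^ ((m : ℕ) * l)) = if j = m then (k : ℂ) else 0 := by
  have hunit (a : ℕ) : conj (ζ ^ a) * ζ ^ a = 1 := by
    rw [conj_mul', norm_pow, norm_eq_one_of_pow_eq_one hζ.pow_eq_one (Fin.pos j).ne']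
    simp
  set z := ζ ^ (j : ℕ) * conj (ζ ^ (m : ℕ)) with hz
  have hterm (l : ℕ) : ζ ^ ((j : ℕ) * l) * conj (ζ ^ ((m : ℕ) * l)) = z ^ l := by
    rw [pow_mul, pow_mul, map_pow, mul_pow]
  simp_rw [hterm]
  rw [Fin.sum_univ_eq_sum_range (z ^ ·)]
  split_ifs with hjm
  · rw [hz, mul_comm, hjm, hunit]
    simp
  · have hz1 : z ≠ 1 := fun h => hjm <| Fin.ext <| hζ.pow_inj j.isLt m.isLt <|
      calc ζ ^ (j : ℕ) = z * ζ ^ (m : ℕ) := by rw [mul_assoc, hunit, mul_one]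
        _ = ζ ^ (m : ℕ) := by rw [h, one_mul]
    have hzk : z ^ k = 1 := by
      rw [mul_pow, ← map_pow, ← pow_mul, ← pow_mul, mul_comm _ k, mul_comm _ k, pow_mul, pow_mul,
        hζ.pow_eq_one, one_pow, one_pow, map_one, one_mul]
    rw [geom_sum_eq hz1, hzk, sub_self, zero_div]

theorem stmt_18_general {k : ℕ}
    (φ : ℂ) (hφ : φ = Complex.exp (2 * Real.pi * Complex.I / k))
    (A : Matrix (Fin k) (Fin k) ℂ)
    (hA : ∀ j l : Fin k, A j l = φ ^ ((j : ℕ) * (l : ℕ))) :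
    ∃ v : Fin k → (Fin k → ℂ),
      Submodule.span ℂ (Set.range v) = ⊤ ∧
      (∀ i j : Fin k, ∑ l, (starRingEnd ℂ) (v i l) * v j l = if i = j then 1 else 0) ∧
      (∀ i, ∃ μ : ℂ, A.mulVec (v i) = μ • v i) ∧
      (∀ i l, (v i l).im = 0) := by
  have hsymm : Aᵀ = A := by
    ext j l
    rw [transpose_apply, hA, hA, mul_comm]
  have hunitary : A * Aᴴ = (k : ℂ) • 1 := by
    ext j m
    have hφ' : IsPrimitiveRoot φ k := hφ ▸ isPrimitiveRoot_exp k (Fin.pos j).ne'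
    simp only [mul_apply, conjTranspose_apply, hA, star_def, hφ'.sum_pow_mul_conj_pow,
      Matrix.smul_apply, one_apply, smul_eq_mul, mul_ite, mul_one, mul_zero]
  have hnormal : Commute A Aᴴ := by
    have hAHA : Aᴴ * A = (A * Aᴴ)ᵀ := by
      rw [transpose_mul, ← conjTranspose_transpose_eq_transpose_conjTranspose, hsymm]
    rw [Commute, SemiconjBy, hAHA, hunitary, transpose_smul, transpose_one]
  exact exists_real_orthonormal_eigenvectors_of_transpose_eq_of_commute hsymm hnormal

/-- The DFT matrix `A` with `A j l = φ^(jl)`, `φ = e^{2πi/k}`, admits an orthonormal basis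
of `ℂ^k` consisting of eigenvectors all of whose coordinates are real. Orthonormality and
spanning are stated explicitly with respect to the standard Hermitian inner product. -/
theorem stmt_18 {k : ℕ} (hk : 2 ≤ k)
    (φ : ℂ) (hφ : φ = Complex.exp (2 * Real.pi * Complex.I / k))
    (A : Matrix (Fin k) (Fin k) ℂ)
    (hA : ∀ j l : Fin k, A j l = φ ^ ((j : ℕ) * (l : ℕ))) :
    ∃ v : Fin k → (Fin k → ℂ),
      Submodule.span ℂ (Set.range v) = ⊤ ∧
      (∀ i j : Fin k, ∑ l, (starRingEnd ℂ) (v i l) * v j l = if i = j then 1 else 0) ∧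
      (∀ i, ∃ μ : ℂ, A.mulVec (v i) = μ • v i) ∧
      (∀ i l, (v i l).im = 0) :=
  stmt_18_general φ hφ A hA
end
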